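/- Let φ : M_k → M_m be linear. Then φ : M_k → OMAX(M_m) is completely positive if and only if there exist finitely many positive linear functionals s_l : M_k → ℂ and positive matrices P_l ∈ M_m^+ such that φ(X) = ∑_l s_l(X) P_l for all X. -/

import Mathlib

open scoped ComplexOrder
open Finset

noncomputable section

section Defs
variable {V : Type*} [AddCommGroup V] [Module ℂ V]

/-- The elementary tensor `a ⊗ v` in `M_n(V) ≅ M_n(ℂ) ⊗ V`. -/
def eTensor {n : ℕ} (a : Matrix (Fin n) (Fin n) ℂ) (v : V) : Matrix (Fin n) (Fin n) V :=
  Matrix.of fun p q => a p q • v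

/-- The conjugation `X* A X` of `A ∈ M_n(V)` by a scalar matrix `X ∈ M_{n,m}(ℂ)`. -/
def mconj {n m : ℕ} (X : Matrix (Fin n) (Fin m) ℂ) (A : Matrix (Fin n) (Fin n) V) :
    Matrix (Fin m) (Fin m) V :=
  Matrix.of fun i j => ∑ k, ∑ l, (star (X k i) * X l j) • A k l

/-- The diagonal matrix `e_n` with `e` in each diagonal entry. -/
def eMat (e : V) (n : ℕ) : Matrix (Fin n) (Fin n) V :=
  Matrix.of fun i j => if i = j then e else 0

/-- The minimal cone `C_n^min(V)`. -/
def Cmin (pos : Set V) (n : ℕ) : Set (Matrix (Fin n) (Fin n) V) :=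
  {M | ∀ lam : Fin n → ℂ, (∑ i, ∑ j, (star (lam i) * lam j) • M i j) ∈ pos}

/-- The cone `D_n^max(V)` of sums of tensors `a ⊗ v` with `a ∈ M_n⁺`, `v ∈ V⁺`. -/
def Dmax (pos : Set V) (n : ℕ) : Set (Matrix (Fin n) (Fin n) V) :=
  {M | ∃ (k : ℕ) (a : Fin k → Matrix (Fin n) (Fin n) ℂ) (v : Fin k → V),
    (∀ i, (a i).PosSemidef) ∧ (∀ i, v i ∈ pos) ∧ M = ∑ i, eTensor (a i) (v i)}

/-- The maximal cone `C_n^max(V)`: the Archimedeanization of `D_n^max(V)`. -/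
def Cmax (pos : Set V) (e : V) (n : ℕ) : Set (Matrix (Fin n) (Fin n) V) :=
  {M | ∀ r : ℝ, 0 < r → (r : ℂ) • eMat e n + M ∈ Dmax pos n}

end Defs

section StarDefs
variable {V : Type*} [AddCommGroup V] [Module ℂ V] [StarAddMonoid V] [StarModule ℂ V]

/-- `(V, pos)` is an ordered `*`-vector space. -/
def IsOrderedStar (pos : Set V) : Prop :=
  (∀ v ∈ pos, star v = v) ∧
  (∀ r : ℝ, 0 ≤ r → ∀ v ∈ pos, (r : ℂ) • v ∈ pos) ∧
  (∀ v ∈ pos, ∀ w ∈ pos, v + w ∈ pos) ∧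
  (∀ v ∈ pos, -v ∈ pos → v = 0)

/-- `(V, pos, e)` is an Archimedean order unit (AOU) space. -/
def IsAOU (pos : Set V) (e : V) : Prop :=
  IsOrderedStar pos ∧ star e = e ∧
  (∀ v : V, star v = v → ∃ r : ℝ, 0 < r ∧ (r : ℂ) • e - v ∈ pos) ∧
  (∀ v : V, (∀ r : ℝ, 0 < r → (r : ℂ) • e + v ∈ pos) → v ∈ pos)

/-- A state on `(V, pos, e)`: a unital positive linear functional. -/
def IsState (pos : Set V) (e : V) (s : V →ₗ[ℂ] ℂ) : Prop :=
  s e = 1 ∧ ∀ v ∈ pos, 0 ≤ s v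

/-- A positive linear functional. -/
def IsPosFunc (pos : Set V) (f : V →ₗ[ℂ] ℂ) : Prop := ∀ v ∈ pos, 0 ≤ f v

/-- A matrix ordering on the `*`-vector space `V`. -/
def IsMatrixOrdering (C : ∀ n : ℕ, Set (Matrix (Fin n) (Fin n) V)) : Prop :=
  (∀ (n : ℕ) (M : Matrix (Fin n) (Fin n) V), M ∈ C n → star M = M) ∧
  (∀ (n : ℕ) (r : ℝ), 0 ≤ r → ∀ M ∈ C n, (r : ℂ) • M ∈ C n) ∧
  (∀ n : ℕ, ∀ M ∈ C n, ∀ N ∈ C n, M + N ∈ C n) ∧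
  (∀ n : ℕ, ∀ M ∈ C n, -M ∈ C n → M = 0) ∧
  (∀ (n m : ℕ) (X : Matrix (Fin n) (Fin m) ℂ), ∀ M ∈ C n, mconj X M ∈ C m)

/-- `e` is a matrix order unit for the family `C`. -/
def IsMatrixOrderUnit (C : ∀ n : ℕ, Set (Matrix (Fin n) (Fin n) V)) (e : V) : Prop :=
  star e = e ∧
  ∀ (n : ℕ) (M : Matrix (Fin n) (Fin n) V), star M = M →
    ∃ r : ℝ, 0 < r ∧ (r : ℂ) • eMat e n - M ∈ C n

/-- `e` is an Archimedean matrix order unit for the family `C`. -/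
def IsArchMatrixOrderUnit (C : ∀ n : ℕ, Set (Matrix (Fin n) (Fin n) V)) (e : V) : Prop :=
  IsMatrixOrderUnit C e ∧
  ∀ (n : ℕ) (M : Matrix (Fin n) (Fin n) V),
    (∀ r : ℝ, 0 < r → (r : ℂ) • eMat e n + M ∈ C n) → M ∈ C n

/-- `(V, C, e)` is an (abstract) operator system. -/
def IsOperatorSystem (C : ∀ n : ℕ, Set (Matrix (Fin n) (Fin n) V)) (e : V) : Prop :=
  IsMatrixOrdering C ∧ IsArchMatrixOrderUnit C e

/-- The ground-level cone of a matrix ordering, under `M_1(V) ≅ V`. -/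
def groundPos (C : ∀ n : ℕ, Set (Matrix (Fin n) (Fin n) V)) : Set V :=
  {v | (Matrix.of fun _ _ : Fin 1 => v) ∈ C 1}

/-- An operator system structure on the AOU space `(V, pos, e)`. -/
def IsOpSysStructure (pos : Set V) (e : V) (C : ∀ n : ℕ, Set (Matrix (Fin n) (Fin n) V)) :
    Prop :=
  IsOperatorSystem C e ∧ C 1 = {M | M 0 0 ∈ pos}

end StarDefs

section DualDefs
variable {V : Type*} [AddCommGroup V] [Module ℂ V] [StarAddMonoid V] [StarModule ℂ V]

/-- The adjoint functional `f*` with `f*(v) = conj (f (v*))`. -/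
def starFunc (f : V →ₗ[ℂ] ℂ) : V →ₗ[ℂ] ℂ where
  toFun v := star (f (star v))
  map_add' v w := by simp
  map_smul' c v := by simp [star_smul, map_smul, mul_comm]

/-- The pairing between a matrix of functionals and a matrix over `V`:
`(f_{ij})((v_{ij})) = ∑_{ij} f_{ij}(v_{ij})`. -/
def dPair {n : ℕ} (F : Matrix (Fin n) (Fin n) (V →ₗ[ℂ] ℂ))
    (A : Matrix (Fin n) (Fin n) V) : ℂ :=
  ∑ i, ∑ j, F i j (A i j)

/-- The dual cones `P_n^d` of a matrix ordering on `V`. -/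
def dualCones (P : ∀ n : ℕ, Set (Matrix (Fin n) (Fin n) V)) (n : ℕ) :
    Set (Matrix (Fin n) (Fin n) (V →ₗ[ℂ] ℂ)) :=
  {F | ∀ A ∈ P n, 0 ≤ dPair F A}

/-- The predual cones `^dQ_n` of a matrix ordering on `V'`. -/
def preCones (Q : ∀ n : ℕ, Set (Matrix (Fin n) (Fin n) (V →ₗ[ℂ] ℂ))) (n : ℕ) :
    Set (Matrix (Fin n) (Fin n) V) :=
  {A | ∀ F ∈ Q n, 0 ≤ dPair F A}

/-- A matrix ordering on the dual space `V'` (hermitian via `starFunc`,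
compatibility under conjugation by scalar matrices). -/
def IsDualMatrixOrdering (Q : ∀ n : ℕ, Set (Matrix (Fin n) (Fin n) (V →ₗ[ℂ] ℂ))) : Prop :=
  (∀ (n : ℕ) (F : Matrix (Fin n) (Fin n) (V →ₗ[ℂ] ℂ)), F ∈ Q n →
    ∀ i j, F i j = starFunc (F j i)) ∧
  (∀ (n : ℕ) (r : ℝ), 0 ≤ r → ∀ F ∈ Q n, (r : ℂ) • F ∈ Q n) ∧
  (∀ n : ℕ, ∀ F ∈ Q n, ∀ G ∈ Q n, F + G ∈ Q n) ∧
  (∀ n : ℕ, ∀ F ∈ Q n, -F ∈ Q n → F = 0) ∧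
  (∀ (n m : ℕ) (X : Matrix (Fin n) (Fin m) ℂ), ∀ F ∈ Q n, mconj X F ∈ Q m)

/-- Weak*-closedness of a set of matrices of functionals: closedness in the topology
induced by the pairing against all of `M_n(V)`, with the topology of pointwise convergence. -/
def WeakStarClosed {n : ℕ} (Q : Set (Matrix (Fin n) (Fin n) (V →ₗ[ℂ] ℂ))) : Prop :=
  @IsClosed _ (TopologicalSpace.induced
    (fun F : Matrix (Fin n) (Fin n) (V →ₗ[ℂ] ℂ) => fun A => dPair F A)
    Pi.topologicalSpace) Q

/-- The minimal norm on an AOU space: `‖v‖_m = sup { |s(v)| : s a state }`. -/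
def minNorm (pos : Set V) (e : V) (v : V) : ℝ :=
  ⨆ s : {s : V →ₗ[ℂ] ℂ // IsState pos e s}, ‖s.1 v‖

/-- Bounded (continuous) linear functionals on `V`. -/
def IsBddFunc (pos : Set V) (e : V) (f : V →ₗ[ℂ] ℂ) : Prop :=
  ∃ c : ℝ, ∀ v, ‖f v‖ ≤ c * minNorm pos e v

end DualDefs

end

/-- Flatten a `p × p` block matrix with `n × n` blocks to an `np × np` matrix. -/
def flattenC {p n : ℕ} (M : Matrix (Fin p) (Fin p) (Matrix (Fin n) (Fin n) ℂ)) :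
    Matrix (Fin p × Fin n) (Fin p × Fin n) ℂ :=
  Matrix.of fun a b => M a.1 b.1 a.2 b.2

/-- Positivity of an element of `M_p(M_n)` via the identification with `M_{pn}`. -/
def BlockPSD {p n : ℕ} (M : Matrix (Fin p) (Fin p) (Matrix (Fin n) (Fin n) ℂ)) : Prop :=
  (flattenC M).PosSemidef


/-!
Reverse direction: if `φ = ∑ₗ sₗ(·) Pₗ`, then for a positive block matrix `M` we get
`φ⁽ⁿ⁾(M) = ∑ₗ (sₗ(M_pq))_pq ⊗ Pₗ`, and each `(sₗ(M_pq))_pq` is positive because it is `sₗ`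
applied to compressions of `M`; so `φ⁽ⁿ⁾(M) ∈ D_n^max ⊆ C_n^max`.

Forward direction: the Choi matrix `(φ(E_ij))_ij` is positive, so it lies in
`C_k^max(M_m)`, which equals `D_k^max(M_m)` because the latter cone is closed: it is generated
by the compact set of tensors `a ⊗ v` of density matrices, on which the linear functional
`tr ⊗ tr` is identically `1`. Writing `(φ(E_ij))_ij = ∑ₗ aₗ ⊗ Pₗ` and reading off entries gives
`φ(X) = ∑ₗ tr(X aₗᵀ) Pₗ`, and `X ↦ tr(X aₗᵀ)` is positive since `aₗᵀ` is.
-/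

open Set Pointwise Matrix Filter Topology

section ConeOverCompactBase

variable {E : Type*} [AddCommGroup E] [Module ℝ E]

lemma Convex.add_mem_Ici_smul {C : Set E} (hC : Convex ℝ C) {x y : E}
    (hx : x ∈ Ici (0 : ℝ) • C) (hy : y ∈ Ici (0 : ℝ) • C) : x + y ∈ Ici (0 : ℝ) • C := by
  obtain ⟨s, hs, c, hc, rfl⟩ := hx
  obtain ⟨t, ht, d, hd, rfl⟩ := hy
  rw [Set.mem_Ici] at hs ht
  rcases (add_nonneg hs ht).eq_or_lt with hst | hst
  · obtain ⟨rfl, rfl⟩ := (add_eq_zero_iff_of_nonneg hs ht).1 hst.symm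
    exact ⟨0, Set.self_mem_Ici, c, hc, by simp⟩
  refine ⟨s + t, hst.le, (s / (s + t)) • c + (t / (s + t)) • d,
    hC hc hd (by positivity) (by positivity) (by field_simp), ?_⟩
  simp only [smul_add, smul_smul, mul_div_cancel₀ _ hst.ne']

lemma PointedCone.coe_hull_eq_insert_zero (K : Set E) :
    (PointedCone.hull ℝ K : Set E) = insert 0 (Ici (0 : ℝ) • convexHull ℝ K) := by
  refine Subset.antisymm (fun x hx => ?_) (insert_subset (PointedCone.hull ℝ K).zero_mem ?_)
  · induction hx using Submodule.span_induction with
    | mem x hx => exact Or.inr ⟨1, Set.mem_Ici.2 zero_le_one, x, subset_convexHull ℝ K hx, one_smul ℝ x⟩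
    | zero => exact mem_insert 0 _
    | add x y _ _ hx hy =>
      rcases hx with rfl | hx
      · simpa using hy
      rcases hy with rfl | hy
      · simpa using Or.inr hx
      exact Or.inr ((convex_convexHull ℝ K).add_mem_Ici_smul hx hy)
    | smul a x _ hx =>
      rcases hx with rfl | ⟨t, ht, c, hc, rfl⟩
      · simp
      exact Or.inr ⟨a * t, mul_nonneg a.2 ht, c, hc, mul_smul (a : ℝ) t c⟩
  · rintro _ ⟨t, ht, c, hc, rfl⟩
    exact (PointedCone.hull ℝ K).smul_mem ht <|
      convexHull_min PointedCone.subset_hull (PointedCone.hull ℝ K).convex hc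

variable [TopologicalSpace E]

theorem isCompact_convexHull [IsTopologicalAddGroup E] [ContinuousSMul ℝ E]
    [FiniteDimensional ℝ E] {K : Set E} (hK : IsCompact K) : IsCompact (convexHull ℝ K) := by
  -- By Carathéodory, convex combinations of at most `finrank + 1` points of `K` suffice.
  have hhull : convexHull ℝ K = ⋃ c : Fin (Module.finrank ℝ E + 2),
      (fun p : (Fin c → ℝ) × (Fin c → E) => ∑ i, p.1 i • p.2 i) ''
        (stdSimplex ℝ (Fin c) ×ˢ univ.pi fun _ => K) := by
    refine Subset.antisymm (fun x hx => ?_) (iUnion_subset fun c => ?_)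
    · obtain ⟨ι, _, z, w, hzK, hz, hw, hw1, rfl⟩ := eq_pos_convex_span_of_mem_convexHull hx
      have hcard : Fintype.card ι < Module.finrank ℝ E + 2 :=
        Nat.lt_succ_of_le (hz.card_le_finrank_succ.trans (by gcongr; exact Submodule.finrank_le _))
      let e := (Fintype.equivFin ι).symm
      refine mem_iUnion.2 ⟨⟨_, hcard⟩, ⟨w ∘ e, z ∘ e⟩, ⟨⟨fun i => (hw _).le, ?_⟩,
        fun i _ => hzK (mem_range_self _)⟩, ?_⟩
      · simpa [e] using (e.sum_comp w).trans hw1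
      · exact e.sum_comp fun i => w i • z i
    · rintro _ ⟨⟨w, z⟩, ⟨hw, hz⟩, rfl⟩
      exact (convex_convexHull ℝ K).sum_mem (fun i _ => hw.1 i) hw.2
        fun i _ => subset_convexHull ℝ K (hz i trivial)
  rw [hhull]
  exact isCompact_iUnion fun c => ((isCompact_stdSimplex ℝ (Fin c)).prod
    (isCompact_univ_pi fun _ => hK)).image <| continuous_finsetSum _ fun i _ =>
      ((continuous_apply i).comp continuous_fst).smul ((continuous_apply i).comp continuous_snd)

theorem isClosed_Ici_smul_of_isCompact [ContinuousSMul ℝ E] [T2Space E] {C : Set E}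
    (hC : IsCompact C) (L : E →L[ℝ] ℝ) (hL : ∀ x ∈ C, L x = 1) :
    IsClosed (Ici (0 : ℝ) • C) := by
  refine isClosed_of_closure_subset fun x hx => ?_
  -- Near `x` the cone is the image of the compact set `[0, L x + 1] • C`, since `L (t • c) = t`.
  let U := {y | L y < L x + 1}
  have hUC : U ∩ Ici (0 : ℝ) • C ⊆ Icc 0 (L x + 1) • C := by
    rintro _ ⟨hy, t, ht, c, hc, rfl⟩
    simp only [U, mem_ofPred_eq, map_smul, hL c hc, smul_eq_mul, mul_one] at hy
    exact ⟨t, ⟨ht, hy.le⟩, c, hc, rfl⟩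
  have hxU : x ∈ closure (U ∩ Ici (0 : ℝ) • C) :=
    (isOpen_lt L.continuous continuous_const).inter_closure ⟨by simp, hx⟩
  exact Set.smul_subset_smul_right Set.Icc_subset_Ici_self <|
    (isCompact_Icc.smul_set hC).isClosed.closure_subset_iff.2 hUC hxU

theorem PointedCone.isClosed_hull_of_isCompact [IsTopologicalAddGroup E] [ContinuousSMul ℝ E]
    [T2Space E] [FiniteDimensional ℝ E] {K : Set E} (hK : IsCompact K) (L : E →L[ℝ] ℝ)
    (hL : ∀ x ∈ K, L x = 1) : IsClosed (PointedCone.hull ℝ K : Set E) := by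
  have hLhull : ∀ x ∈ convexHull ℝ K, L x = 1 :=
    fun x hx => convexHull_min hL (convex_hyperplane L.isLinear 1) hx
  rw [coe_hull_eq_insert_zero, insert_eq]
  exact isClosed_singleton.union (isClosed_Ici_smul_of_isCompact (isCompact_convexHull hK) L hLhull)

end ConeOverCompactBase

namespace Matrix

theorem PosSemidef.trace_mul_nonneg {ι 𝕜 : Type*} [Fintype ι] [RCLike 𝕜] {A B : Matrix ι ι 𝕜}
    (hA : A.PosSemidef) (hB : B.PosSemidef) : 0 ≤ (A * B).trace := by
  convert (hA.hadamard hB.transpose).dotProduct_mulVec_nonneg (fun _ => 1) using 1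
  simp [trace, mul_apply, dotProduct, mulVec]

variable {ι : Type*} [Fintype ι]

theorem posSemidef_of_forall_dotProduct_mulVec_nonneg [DecidableEq ι] {A : Matrix ι ι ℂ}
    (h : ∀ x, 0 ≤ star x ⬝ᵥ A *ᵥ x) : A.PosSemidef := by
  rw [← isPositive_toEuclideanLin_iff, LinearMap.isPositive_iff_complex]
  intro x
  obtain ⟨r, hr, hxr⟩ := RCLike.nonneg_iff_exists_ofReal.1 (h x.ofLp)
  have : inner ℂ (A.toEuclideanLin x) x = r := by
    rw [EuclideanSpace.inner_eq_star_dotProduct, dotProduct_comm, star_dotProduct]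
    simp [← hxr]
  simp [this, hr]

theorem isClosed_setOf_posSemidef [DecidableEq ι] : IsClosed {A : Matrix ι ι ℂ | A.PosSemidef} := by
  have : {A : Matrix ι ι ℂ | A.PosSemidef} =
      ⋂ x : ι → ℂ, {A | 0 ≤ star x ⬝ᵥ A *ᵥ x} :=
    Set.ext fun A => ⟨fun hA => mem_iInter.2 hA.dotProduct_mulVec_nonneg,
      fun hA => posSemidef_of_forall_dotProduct_mulVec_nonneg (mem_iInter.1 hA)⟩
  rw [this]
  exact isClosed_iInter fun x => isClosed_le continuous_const <|
    continuous_const.dotProduct (continuous_id.matrix_mulVec continuous_const)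

theorem PosSemidef.norm_apply_le_trace_re {A : Matrix ι ι ℂ} (hA : A.PosSemidef)
    (i j : ι) : ‖A i j‖ ≤ A.trace.re := by
  have hdiag : ∀ k, 0 ≤ A k k ∧ A k k ≤ A.trace := fun k =>
    ⟨hA.diag_nonneg,
      Finset.single_le_sum (f := fun l => A l l) (fun l _ => hA.diag_nonneg) (Finset.mem_univ k)⟩
  -- `‖A i j‖ ^ 2 ≤ A i i * A j j` is the nonnegativity of the principal minor on `{i, j}`.
  have hminor := (hA.submatrix ![i, j]).det_nonneg
  simp only [det_fin_two, submatrix_apply, cons_val_zero, cons_val_one] at hminor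
  rw [← hA.isHermitian.apply j i, Complex.star_def, Complex.mul_conj', sub_nonneg] at hminor
  have htr : (A.trace.re : ℂ) = A.trace :=
    (Complex.eq_re_of_ofReal_le (r := 0) (by simpa using hA.trace_nonneg)).symm
  have hsq : ((‖A i j‖ ^ 2 : ℝ) : ℂ) ≤ ((A.trace.re ^ 2 : ℝ) : ℂ) := by
    push_cast
    rw [htr, sq A.trace]
    exact hminor.trans (mul_le_mul (hdiag i).2 (hdiag j).2 (hdiag j).1
      ((hdiag i).1.trans (hdiag i).2))
  exact le_of_pow_le_pow_left₀ two_ne_zero (by simpa using Complex.re_le_re hA.trace_nonneg)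
    (by exact_mod_cast hsq)

def densityMatrices (ι : Type*) [Fintype ι] : Set (Matrix ι ι ℂ) :=
  {A | A.PosSemidef ∧ A.trace = 1}

theorem isCompact_densityMatrices [DecidableEq ι] : IsCompact (densityMatrices ι) := by
  refine (isCompact_univ_pi fun _ => isCompact_univ_pi fun _ =>
    isCompact_closedBall (0 : ℂ) 1).of_isClosed_subset ?_ ?_
  · exact isClosed_setOf_posSemidef.inter (isClosed_eq continuous_id.matrix_trace continuous_const)
  · rintro A ⟨hA, htr⟩ i - j -
    simpa [htr] using hA.norm_apply_le_trace_re i j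

lemma PosSemidef.inv_trace_smul_mem_densityMatrices {a : Matrix ι ι ℂ}
    (ha : a.PosSemidef) (h : a.trace ≠ 0) : (a.trace)⁻¹ • a ∈ densityMatrices ι :=
  ⟨ha.smul (inv_nonneg.2 ha.trace_nonneg), by simp [trace_smul, h]⟩

end Matrix

theorem BlockPSD.posSemidef_map {p n : ℕ} {M : Matrix (Fin p) (Fin p) (Matrix (Fin n) (Fin n) ℂ)}
    (hM : BlockPSD M) {s : Matrix (Fin n) (Fin n) ℂ →ₗ[ℂ] ℂ}
    (hs : ∀ X : Matrix (Fin n) (Fin n) ℂ, X.PosSemidef → 0 ≤ s X) : (M.map s).PosSemidef := by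
  refine posSemidef_of_forall_dotProduct_mulVec_nonneg fun x => ?_
  -- `∑ x̄ₚ x_q M_pq` is the compression of `flattenC M` by `x ⊗ 1`.
  have hY : (∑ p, ∑ q, (star (x p) * x q) • M p q).PosSemidef := by
    convert hM.conjTranspose_mul_mul_same
      (Matrix.of fun (a : Fin p × Fin n) j => x a.1 * (1 : Matrix (Fin n) (Fin n) ℂ) a.2 j) using 1
    ext i j
    simp [mul_apply, flattenC, Fintype.sum_prod_type, one_apply, Matrix.sum_apply, apply_ite,
      Finset.sum_mul]
    rw [Finset.sum_comm]
    simp [mul_comm, mul_left_comm]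
  convert hs _ hY using 1
  simp only [dotProduct, mulVec, map_sum, map_smul, Finset.mul_sum]
  exact Finset.sum_congr rfl fun _ _ => Finset.sum_congr rfl fun _ _ => by simp; ring

section Dmax

variable {V : Type*} [AddCommGroup V] [Module ℂ V] {n : ℕ}

@[simp] lemma eTensor_zero_left (v : V) : eTensor (0 : Matrix (Fin n) (Fin n) ℂ) v = 0 := by
  ext; simp [eTensor]

@[simp] lemma eTensor_zero_right (a : Matrix (Fin n) (Fin n) ℂ) : eTensor a (0 : V) = 0 := by
  ext; simp [eTensor]

lemma eTensor_smul_left (c : ℂ) (a : Matrix (Fin n) (Fin n) ℂ) (v : V) :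
    eTensor (c • a) v = c • eTensor a v := by
  ext; simp [eTensor, smul_smul]

lemma eTensor_smul_right (c : ℂ) (a : Matrix (Fin n) (Fin n) ℂ) (v : V) :
    eTensor a (c • v) = c • eTensor a v := by
  ext; simp [eTensor, smul_comm c]

lemma eTensor_one_left (v : V) : eTensor (1 : Matrix (Fin n) (Fin n) ℂ) v = eMat v n := by
  ext i j; by_cases h : i = j <;> simp [eTensor, eMat, one_apply, h]

lemma trace_eTensor (a : Matrix (Fin n) (Fin n) ℂ) (v : V) :
    (eTensor a v).trace = a.trace • v := by
  simp [eTensor, trace, Finset.sum_smul]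

variable {pos : Set V}

lemma eTensor_mem_Dmax {a : Matrix (Fin n) (Fin n) ℂ} {v : V} (ha : a.PosSemidef)
    (hv : v ∈ pos) : eTensor a v ∈ Dmax pos n :=
  ⟨1, fun _ => a, fun _ => v, fun _ => ha, fun _ => hv, by simp⟩

lemma zero_mem_Dmax : (0 : Matrix (Fin n) (Fin n) V) ∈ Dmax pos n :=
  ⟨0, ![], ![], nofun, nofun, by simp⟩

lemma add_mem_Dmax {M N : Matrix (Fin n) (Fin n) V} (hM : M ∈ Dmax pos n)
    (hN : N ∈ Dmax pos n) : M + N ∈ Dmax pos n := by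
  obtain ⟨k, a, v, ha, hv, rfl⟩ := hM
  obtain ⟨l, b, w, hb, hw, rfl⟩ := hN
  exact ⟨k + l, Fin.append a b, Fin.append v w, Fin.addCases (by simpa) (by simpa),
    Fin.addCases (by simpa) (by simpa), by simp [Fin.sum_univ_add]⟩

lemma smul_mem_Dmax {c : ℂ} (hc : 0 ≤ c) {M : Matrix (Fin n) (Fin n) V}
    (hM : M ∈ Dmax pos n) : c • M ∈ Dmax pos n := by
  obtain ⟨k, a, v, ha, hv, rfl⟩ := hM
  exact ⟨k, fun i => c • a i, v, fun i => (ha i).smul hc, hv, by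
    simp [Finset.smul_sum, eTensor_smul_left]⟩

lemma Dmax_subset_Cmax {e : V} (he : e ∈ pos) : Dmax pos n ⊆ Cmax pos e n := fun _ hM r hr =>
  add_mem_Dmax (smul_mem_Dmax (by exact_mod_cast hr.le)
    (eTensor_one_left e ▸ eTensor_mem_Dmax PosSemidef.one he)) hM

end Dmax

section DmaxPosSemidef

variable {n m : ℕ}

/-- A compact base of the cone `D_n^max(M_m)`. -/
def densityTensors (n m : ℕ) : Set (Matrix (Fin n) (Fin n) (Matrix (Fin m) (Fin m) ℂ)) :=
  (fun p => eTensor p.1 p.2) '' (densityMatrices (Fin n) ×ˢ densityMatrices (Fin m))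

lemma isCompact_densityTensors : IsCompact (densityTensors n m) :=
  (isCompact_densityMatrices.prod isCompact_densityMatrices).image <| by
    unfold eTensor; fun_prop

lemma eTensor_mem_hull_densityTensors {a : Matrix (Fin n) (Fin n) ℂ}
    {v : Matrix (Fin m) (Fin m) ℂ} (ha : a.PosSemidef) (hv : v.PosSemidef) :
    eTensor a v ∈ PointedCone.hull ℝ (densityTensors n m) := by
  by_cases ha0 : a.trace = 0
  · simp [ha.trace_eq_zero_iff.1 ha0]
  by_cases hv0 : v.trace = 0
  · simp [hv.trace_eq_zero_iff.1 hv0]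
  have htr : 0 ≤ a.trace * v.trace := mul_nonneg ha.trace_nonneg hv.trace_nonneg
  have hnormalize : eTensor a v =
      (a.trace * v.trace).re • eTensor ((a.trace)⁻¹ • a) ((v.trace)⁻¹ • v) := by
    rw [← Complex.coe_smul, ← Complex.eq_re_of_ofReal_le (r := 0) (by simpa using htr),
      eTensor_smul_left, eTensor_smul_right, smul_smul, smul_smul]
    field_simp
    simp
  rw [hnormalize]
  exact (PointedCone.hull ℝ _).smul_mem (Complex.re_le_re htr) <| PointedCone.subset_hull
    ⟨(_, _), ⟨ha.inv_trace_smul_mem_densityMatrices ha0,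
      hv.inv_trace_smul_mem_densityMatrices hv0⟩, rfl⟩

theorem Dmax_posSemidef_eq_hull : Dmax {X : Matrix (Fin m) (Fin m) ℂ | X.PosSemidef} n =
    PointedCone.hull ℝ (densityTensors n m) := by
  ext M
  constructor
  · rintro ⟨k, a, v, ha, hv, rfl⟩
    exact sum_mem fun i _ => eTensor_mem_hull_densityTensors (ha i) (hv i)
  · intro hM
    induction hM using Submodule.span_induction with
    | mem x hx =>
      obtain ⟨⟨a, v⟩, ⟨⟨ha, -⟩, hv, -⟩, rfl⟩ := hx
      exact eTensor_mem_Dmax ha hv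
    | zero => exact zero_mem_Dmax
    | add x y _ _ hx hy => exact add_mem_Dmax hx hy
    | smul t x _ hx =>
      show (t : ℝ) • x ∈ _
      rw [← Complex.coe_smul]
      exact smul_mem_Dmax (by exact_mod_cast t.2) hx

theorem isClosed_Dmax_posSemidef :
    IsClosed (Dmax {X : Matrix (Fin m) (Fin m) ℂ | X.PosSemidef} n) := by
  rw [Dmax_posSemidef_eq_hull]
  refine PointedCone.isClosed_hull_of_isCompact isCompact_densityTensors
    (LinearMap.toContinuousLinearMap
      (Complex.reLm ∘ₗ traceLinearMap (Fin m) ℝ ℂ ∘ₗ traceLinearMap (Fin n) ℝ _)) ?_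
  rintro _ ⟨⟨a, v⟩, ⟨⟨-, ha⟩, -, hv⟩, rfl⟩
  simp [trace_eTensor, ha, hv]

theorem Cmax_posSemidef_subset_Dmax :
    Cmax {X : Matrix (Fin m) (Fin m) ℂ | X.PosSemidef} 1 n ⊆ Dmax {X | X.PosSemidef} n := by
  intro M hM
  have hlim : Tendsto (fun r : ℝ => (r : ℂ) • eMat (1 : Matrix (Fin m) (Fin m) ℂ) n + M)
      (𝓝[>] 0) (𝓝 M) := by
    refine Tendsto.mono_left ?_ nhdsWithin_le_nhds
    simpa using ((Complex.continuous_ofReal.smul continuous_const).add continuous_const).tendsto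
      (0 : ℝ) (f := fun r : ℝ => (r : ℂ) • eMat (1 : Matrix (Fin m) (Fin m) ℂ) n + M)
  exact isClosed_Dmax_posSemidef.mem_of_tendsto hlim (eventually_nhdsWithin_of_forall hM)

end DmaxPosSemidef

section Choi

variable {k m : ℕ}

/-- The block matrix `(E_ij)_ij` of matrix units: `(matrixUnits k).map φ` is the Choi matrix
of `φ`. -/
def matrixUnits (k : ℕ) : Matrix (Fin k) (Fin k) (Matrix (Fin k) (Fin k) ℂ) :=
  Matrix.of fun i j => single i j 1

lemma blockPSD_matrixUnits : BlockPSD (matrixUnits k) := by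
  unfold BlockPSD
  convert posSemidef_vecMulVec_self_star (fun a : Fin k × Fin k => if a.1 = a.2 then (1 : ℂ) else 0)
    using 1
  ext a b
  simp [flattenC, matrixUnits, vecMulVec, single_apply, ite_and]
  split_ifs <;> rfl

lemma eq_sum_trace_mul_smul_of_choi {φ : Matrix (Fin k) (Fin k) ℂ →ₗ[ℂ] Matrix (Fin m) (Fin m) ℂ}
    {q : ℕ} {a : Fin q → Matrix (Fin k) (Fin k) ℂ} {P : Fin q → Matrix (Fin m) (Fin m) ℂ}
    (h : (matrixUnits k).map φ = ∑ l, eTensor (a l) (P l)) (X : Matrix (Fin k) (Fin k) ℂ) :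
    φ X = ∑ l, (X * (a l)ᵀ).trace • P l := by
  have hE : ∀ i j, φ (single i j 1) = ∑ l, a l i j • P l := fun i j => by
    simpa [matrixUnits, eTensor, Matrix.sum_apply] using congr_fun (congr_fun h i) j
  calc φ X = ∑ i, ∑ j, X i j • φ (single i j 1) := by
        conv_lhs => rw [matrix_eq_sum_single X]
        simp [map_sum, ← map_smul]
    _ = ∑ i, ∑ j, ∑ l, (X i j * a l i j) • P l := by simp [hE, Finset.smul_sum, smul_smul]
    _ = ∑ l, ∑ i, ∑ j, (X i j * a l i j) • P l :=
        (Finset.sum_congr rfl fun _ _ => Finset.sum_comm).trans Finset.sum_comm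
    _ = ∑ l, (X * (a l)ᵀ).trace • P l := by simp [trace, mul_apply, Finset.sum_smul]

end Choi

lemma map_mem_Dmax_of_eq_sum_smul {k m n q : ℕ}
    {φ : Matrix (Fin k) (Fin k) ℂ →ₗ[ℂ] Matrix (Fin m) (Fin m) ℂ}
    {s : Fin q → (Matrix (Fin k) (Fin k) ℂ →ₗ[ℂ] ℂ)} {P : Fin q → Matrix (Fin m) (Fin m) ℂ}
    (hs : ∀ l, ∀ X : Matrix (Fin k) (Fin k) ℂ, X.PosSemidef → 0 ≤ s l X)
    (hP : ∀ l, (P l).PosSemidef) (hφ : ∀ X, φ X = ∑ l, s l X • P l)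
    {M : Matrix (Fin n) (Fin n) (Matrix (Fin k) (Fin k) ℂ)} (hM : BlockPSD M) :
    M.map φ ∈ Dmax {X : Matrix (Fin m) (Fin m) ℂ | X.PosSemidef} n := by
  have hsum : M.map φ = ∑ l, eTensor (M.map (s l)) (P l) := by
    ext; simp [hφ, eTensor, Matrix.sum_apply]
  rw [hsum]
  exact Finset.sum_induction _ (· ∈ Dmax _ n) (fun _ _ => add_mem_Dmax) zero_mem_Dmax
    fun l _ => eTensor_mem_Dmax (hM.posSemidef_map (hs l)) (hP l)

/-- A linear map `φ : M_k → M_m` is completely positive into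
`OMAX(M_m)` iff `φ(X) = ∑_l s_l(X) P_l` for finitely many positive linear functionals
`s_l` on `M_k` and positive matrices `P_l ∈ M_m⁺`. -/
theorem cp_into_OMAX_iff_sum_of_states
    (k m : ℕ) (φ : Matrix (Fin k) (Fin k) ℂ →ₗ[ℂ] Matrix (Fin m) (Fin m) ℂ) :
    (∀ (n : ℕ) (M : Matrix (Fin n) (Fin n) (Matrix (Fin k) (Fin k) ℂ)),
        BlockPSD M →
        M.map φ ∈ Cmax {X : Matrix (Fin m) (Fin m) ℂ | X.PosSemidef}
          (1 : Matrix (Fin m) (Fin m) ℂ) n) ↔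
    ∃ (q : ℕ) (s : Fin q → (Matrix (Fin k) (Fin k) ℂ →ₗ[ℂ] ℂ))
      (P : Fin q → Matrix (Fin m) (Fin m) ℂ),
      (∀ l, ∀ X : Matrix (Fin k) (Fin k) ℂ, X.PosSemidef → 0 ≤ s l X) ∧
      (∀ l, (P l).PosSemidef) ∧
      (∀ X, φ X = ∑ l, s l X • P l) := by
  constructor
  · intro hφ
    obtain ⟨q, a, P, ha, hP, hchoi⟩ :=
      Cmax_posSemidef_subset_Dmax (hφ k (matrixUnits k) blockPSD_matrixUnits)
    exact ⟨q, fun l => traceLinearMap (Fin k) ℂ ℂ ∘ₗ LinearMap.mulRight ℂ (a l)ᵀ, P,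
      fun l X hX => hX.trace_mul_nonneg (ha l).transpose, hP, eq_sum_trace_mul_smul_of_choi hchoi⟩
  · rintro ⟨q, s, P, hs, hP, hφ⟩ n M hM
    exact Dmax_subset_Cmax (by exact PosSemidef.one) (map_mem_Dmax_of_eq_sum_smul hs hP hφ hM)
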